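/- arXiv:1810.03792 — 2 statements merged into one kernel-verified Lean document; each statement's English description precedes it below -/
import Mathlib

section
/- Let (V,w) be an edge-weighted graph and W ⊆ V. Define an edge-weighted graph (W, w') by w'(u,v) = w(u,v) for all distinct u, v ∈ W, and w'(u,u) = w(u,u) + Σ_{v ∈ V \ W} w(u,v) for all u ∈ W. Then for every S ⊆ W, the weight covered by S in (W, w') equals the weight covered by S in (V, w): E_{w'}(S) = E_w(S). -/
open Finset

variable {V : Type*} [Fintype V] [DecidableEq V]

/-- The total weight covered by `S`: self-loop weights of vertices in `S` plus the
weight of every unordered pair of distinct vertices with at least one endpoint in `S`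
(each unordered pair is counted twice in the ordered sum, hence the factor `1/2`). -/
noncomputable def covW {α : Type*} [Fintype α] [DecidableEq α]
    (w : α → α → ℝ) (S : Finset α) : ℝ :=
  ∑ v ∈ S, w v v +
    (1 / 2) * ∑ p ∈ (univ ×ˢ univ).filter
      (fun p : α × α => p.1 ≠ p.2 ∧ (p.1 ∈ S ∨ p.2 ∈ S)), w p.1 p.2

theorem statement_13 (w : V → V → ℝ)
    (hsymm : ∀ u v, w u v = w v u) (hnonneg : ∀ u v, 0 ≤ w u v)
    (W : Finset V)
    (w' : {x // x ∈ W} → {x // x ∈ W} → ℝ)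
    (hw'offdiag : ∀ u v : {x // x ∈ W}, u ≠ v → w' u v = w u.1 v.1)
    (hw'diag : ∀ u : {x // x ∈ W}, w' u u = w u.1 u.1 + ∑ v ∈ Wᶜ, w u.1 v)
    (S : Finset {x // x ∈ W}) :
    covW w' S = covW w (S.map (Function.Embedding.subtype fun x => x ∈ W)) := by
  classical
  set S' := S.map (Function.Embedding.subtype fun x => x ∈ W) with hS'def
  have hmem : ∀ u : {x // x ∈ W}, (u : V) ∈ S' ↔ u ∈ S := fun u =>
    Finset.mem_map' _
  have hSW : ∀ v ∈ S', v ∈ W := by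
    intro v hv
    rcases Finset.mem_map.mp hv with ⟨a, _, rfl⟩
    exact a.2
  have hS'subW : S' ⊆ W := hSW
  -- cross term
  set C : ℝ := ∑ u ∈ S', ∑ x ∈ Wᶜ, w u x with hCdef
  have hself : ∑ v ∈ S, w' v v = ∑ v ∈ S', w v v + C := by
    rw [hCdef, hS'def, Finset.sum_map, Finset.sum_map]
    simp only [Function.Embedding.coe_subtype, hw'diag, Finset.sum_add_distrib]
  have hpair :
      ∑ p ∈ (univ ×ˢ univ).filter
        (fun p : {x // x ∈ W} × {x // x ∈ W} => p.1 ≠ p.2 ∧ (p.1 ∈ S ∨ p.2 ∈ S)),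
        w' p.1 p.2
      = (∑ p ∈ (univ ×ˢ univ).filter
          (fun p : V × V => p.1 ≠ p.2 ∧ (p.1 ∈ S' ∨ p.2 ∈ S')), w p.1 p.2) - 2 * C := by
    rw [Finset.sum_filter, Finset.sum_filter, Finset.sum_product, Finset.sum_product]
    -- inner function over V
    set F : V → V → ℝ := fun u v => if u ≠ v ∧ (u ∈ S' ∨ v ∈ S') then w u v else 0 with hF
    have hRHS : ∑ u : V, ∑ v : V, F u v
        = (∑ u ∈ W, ∑ v ∈ W, F u v) + 2 * C := by
      rw [← Finset.sum_add_sum_compl W (fun u => ∑ v : V, F u v)]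
      have h2 : ∀ u ∈ Wᶜ, ∑ v : V, F u v = ∑ v ∈ S', w u v := by
        intro u hu
        have hkey : ∀ v : V, F u v = if v ∈ S' then w u v else 0 := by
          intro v
          by_cases hv : v ∈ S'
          · have hne : u ≠ v := by
              intro h; subst h; exact (Finset.mem_compl.mp hu) (hSW _ hv)
            simp [hF, hv, hne]
          · have huS : u ∉ S' := fun h => (Finset.mem_compl.mp hu) (hSW u h)
            simp [hF, hv, huS]
        simp only [hkey]
        rw [Finset.sum_ite_mem, Finset.univ_inter]
      rw [Finset.sum_congr rfl h2]
      have h3 : ∑ u ∈ Wᶜ, ∑ v ∈ S', w u v = C := by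
        rw [hCdef, Finset.sum_comm]
        exact Finset.sum_congr rfl fun v _ => Finset.sum_congr rfl fun u _ => hsymm u v
      rw [h3]
      have h1 : ∀ u ∈ W, ∑ v : V, F u v = (∑ v ∈ W, F u v) + ∑ v ∈ Wᶜ, F u v := by
        intro u _; rw [← Finset.sum_add_sum_compl W]
      rw [Finset.sum_congr rfl h1, Finset.sum_add_distrib]
      have h4 : ∑ u ∈ W, ∑ v ∈ Wᶜ, F u v = C := by
        have hkey : ∀ u ∈ W, ∑ v ∈ Wᶜ, F u v
            = if u ∈ S' then ∑ v ∈ Wᶜ, w u v else 0 := by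
          intro u hu
          by_cases huS : u ∈ S'
          · rw [if_pos huS]
            refine Finset.sum_congr rfl fun v hv => ?_
            have hvS : v ∉ S' := fun h => (Finset.mem_compl.mp hv) (hSW v h)
            have hne : u ≠ v := by
              intro h; subst h; exact (Finset.mem_compl.mp hv) hu
            simp [hF, hne, huS]
          · rw [if_neg huS]
            refine Finset.sum_eq_zero fun v hv => ?_
            have hvS : v ∉ S' := fun h => (Finset.mem_compl.mp hv) (hSW v h)
            simp [hF, huS, hvS]
        rw [Finset.sum_congr rfl hkey, Finset.sum_ite_mem,
          Finset.inter_eq_right.mpr hS'subW, hCdef]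
      rw [h4]; ring
    rw [hRHS]
    have hLHS : ∀ u : {x // x ∈ W}, ∀ v : {x // x ∈ W},
        (if u ≠ v ∧ (u ∈ S ∨ v ∈ S) then w' u v else 0) = F u.1 v.1 := by
      intro u v
      by_cases h : u ≠ v ∧ (u ∈ S ∨ v ∈ S)
      · have hne : (u : V) ≠ (v : V) := fun he => h.1 (Subtype.ext he)
        have hm : (u : V) ∈ S' ∨ (v : V) ∈ S' := by
          rcases h.2 with h' | h'
          · exact Or.inl ((hmem u).mpr h')
          · exact Or.inr ((hmem v).mpr h')
        rw [if_pos h, hw'offdiag u v h.1, hF]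
        simp [hne, hm]
      · rw [if_neg h, hF]
        simp only
        rw [if_neg]
        intro hc
        exact h ⟨fun he => hc.1 (congrArg Subtype.val he),
          by rcases hc.2 with h' | h'
             · exact Or.inl ((hmem u).mp h')
             · exact Or.inr ((hmem v).mp h')⟩
    simp only [hLHS]
    have : ∑ u : {x // x ∈ W}, ∑ v : {x // x ∈ W}, F u.1 v.1
        = ∑ u ∈ W, ∑ v ∈ W, F u v := by
      rw [← Finset.sum_coe_sort W (fun u => ∑ v ∈ W, F u v)]
      refine Finset.sum_congr rfl fun u _ => ?_
      rw [← Finset.sum_coe_sort W (fun v => F u.1 v)]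
    rw [this]
    ring
  unfold covW
  rw [hself, hpair]
  ring
end

section
/- Let (V,w) be an edge-weighted graph on n = |V| vertices, let k ≤ n be a positive integer, let ε > 0 and α ∈ [0,1]. Set n' = min(k + ⌈k/ε⌉, n), let W ⊆ V be any set of n' vertices of largest weighted degree (|W| = n' and wdeg(u) ≥ wdeg(v) for all u ∈ W, v ∈ V \ W), and let (W, w') be defined by w'(u,v) = w(u,v) for distinct u,v ∈ W and w'(u,u) = w(u,u) + Σ_{v ∈ V \ W} w(u,v). If S ⊆ W has |S| = k and E_{w'}(S) ≥ α · max{E_{w'}(S') : S' ⊆ W, |S'| = k}, then E_w(S) ≥ α(1 − ε) · max{E_w(S') : S' ⊆ V, |S'| = k}. -/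
open Finset

variable {V : Type*} [Fintype V] [DecidableEq V]

/-- The weighted degree of a vertex: `wdeg v = w(v,v) + Σ_{u ≠ v} w(v,u)`. -/
noncomputable def wdeg {α : Type*} [Fintype α] [DecidableEq α]
    (w : α → α → ℝ) (v : α) : ℝ :=
  w v v + ∑ u ∈ univ.filter (fun u => u ≠ v), w v u

section Aux

variable {α : Type*} [Fintype α] [DecidableEq α]

lemma wdeg_eq_sum' (w : α → α → ℝ) (v : α) : wdeg w v = ∑ u, w v u := by
  rw [wdeg, filter_ne', add_comm, Finset.sum_erase_add]
  exact mem_univ v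

lemma covW_nonneg' (w : α → α → ℝ) (h : ∀ u v, 0 ≤ w u v) (A : Finset α) :
    0 ≤ covW w A := by
  refine add_nonneg (Finset.sum_nonneg fun v _ => h v v) ?_
  refine mul_nonneg (by norm_num) (Finset.sum_nonneg fun p _ => h p.1 p.2)

lemma covW_mono' (w : α → α → ℝ) (h : ∀ u v, 0 ≤ w u v) {A B : Finset α} (hAB : A ⊆ B) :
    covW w A ≤ covW w B := by
  refine add_le_add (Finset.sum_le_sum_of_subset_of_nonneg hAB fun v _ _ => h v v) ?_
  refine mul_le_mul_of_nonneg_left ?_ (by norm_num)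
  refine Finset.sum_le_sum_of_subset_of_nonneg ?_ fun p _ _ => h p.1 p.2
  intro p hp
  simp only [mem_filter, mem_product, mem_univ, true_and] at hp ⊢
  exact ⟨hp.1, hp.2.imp (fun h => hAB h) (fun h => hAB h)⟩

lemma covW_eq_F' (w : α → α → ℝ) (hsymm : ∀ u v, w u v = w v u) (A : Finset α) :
    covW w A = (1/2) * ∑ x ∈ A, (w x x + wdeg w x + ∑ y ∈ Aᶜ, w x y) := by
  have hpair : ∑ p ∈ (univ ×ˢ univ).filter
      (fun p : α × α => p.1 ≠ p.2 ∧ (p.1 ∈ A ∨ p.2 ∈ A)), w p.1 p.2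
      = (∑ x ∈ A, (wdeg w x - w x x)) + ∑ x ∈ A, ∑ y ∈ Aᶜ, w x y := by
    rw [Finset.sum_filter, Finset.sum_product]
    have step : ∀ x : α, (∑ y, if x ≠ y ∧ (x ∈ A ∨ y ∈ A) then w x y else 0)
        = (∑ y, if x ≠ y ∧ x ∈ A then w x y else 0)
          + ∑ y, if x ∉ A ∧ y ∈ A then w x y else 0 := by
      intro x
      rw [← Finset.sum_add_distrib]
      refine Finset.sum_congr rfl fun y _ => ?_
      by_cases hxy : x = y <;> by_cases hxA : x ∈ A <;> by_cases hyA : y ∈ A <;>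
        simp [hxy, hxA, hyA]
    rw [Finset.sum_congr rfl fun x _ => step x, Finset.sum_add_distrib]
    congr 1
    · rw [← Finset.sum_filter_add_sum_filter_not univ (fun x => x ∈ A)]
      have h2 : ∑ x ∈ univ.filter (fun x => x ∉ A),
          ∑ y, (if x ≠ y ∧ x ∈ A then w x y else 0) = 0 := by
        refine Finset.sum_eq_zero fun x hx => Finset.sum_eq_zero fun y _ => ?_
        simp at hx; simp [hx]
      rw [h2, add_zero]
      rw [show univ.filter (fun x => x ∈ A) = A by ext x; simp]
      refine Finset.sum_congr rfl fun x hx => ?_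
      have : ∀ y : α, (if x ≠ y ∧ x ∈ A then w x y else 0) = if y ≠ x then w x y else 0 := by
        intro y
        by_cases hxy : x = y <;> simp [hxy, hx, Ne.symm, ne_comm]
      rw [Finset.sum_congr rfl fun y _ => this y, ← Finset.sum_filter]
      rw [wdeg]; ring
    · have : ∀ x : α, (∑ y, if x ∉ A ∧ y ∈ A then w x y else 0)
          = if x ∉ A then ∑ y ∈ A, w x y else 0 := by
        intro x
        by_cases hx : x ∈ A <;> simp [hx, Finset.sum_filter]
      rw [Finset.sum_congr rfl fun x _ => this x, ← Finset.sum_filter]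
      rw [show univ.filter (fun x => x ∉ A) = Aᶜ by ext x; simp]
      rw [Finset.sum_comm]
      refine Finset.sum_congr rfl fun y hy => Finset.sum_congr rfl fun x hx => hsymm x y
  rw [covW, hpair]
  rw [Finset.sum_add_distrib, Finset.sum_add_distrib, Finset.sum_sub_distrib]
  ring

lemma covW_insert' (w : α → α → ℝ) (hsymm : ∀ u v, w u v = w v u)
    {A : Finset α} {y : α} (hy : y ∉ A) :
    covW w (insert y A) = covW w A + wdeg w y - ∑ x ∈ A, w y x := by
  rw [covW_eq_F' w hsymm, covW_eq_F' w hsymm, Finset.sum_insert hy]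
  have hcompl : (insert y A)ᶜ = Aᶜ.erase y := by
    ext z; simp [mem_erase, and_comm]
  have hyAc : y ∈ Aᶜ := by simpa using hy
  have herase : ∀ x : α, ∑ z ∈ (insert y A)ᶜ, w x z = (∑ z ∈ Aᶜ, w x z) - w x y := by
    intro x; rw [hcompl, Finset.sum_erase_eq_sub hyAc]
  have hAc : ∑ z ∈ Aᶜ, w y z = wdeg w y - ∑ z ∈ A, w y z := by
    rw [wdeg_eq_sum', eq_sub_iff_add_eq, Finset.sum_compl_add_sum]
  have hsplit : ∑ x ∈ A, (w x x + wdeg w x + ∑ z ∈ (insert y A)ᶜ, w x z)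
      = (∑ x ∈ A, (w x x + wdeg w x + ∑ z ∈ Aᶜ, w x z)) - ∑ x ∈ A, w x y := by
    rw [← Finset.sum_sub_distrib]
    refine Finset.sum_congr rfl fun x _ => ?_
    rw [herase x]; ring
  rw [hsplit, herase y, hAc]
  have hxy : ∑ x ∈ A, w x y = ∑ x ∈ A, w y x := Finset.sum_congr rfl fun x _ => hsymm x y
  rw [hxy]; ring

lemma cross_le_covW' (w : α → α → ℝ) (hsymm : ∀ u v, w u v = w v u)
    (hnonneg : ∀ u v, 0 ≤ w u v) (A : Finset α) :
    ∑ x ∈ A, ∑ y ∈ Aᶜ, w x y ≤ covW w A := by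
  rw [covW_eq_F' w hsymm]
  have h : ∀ x ∈ A, ∑ y ∈ Aᶜ, w x y ≤ wdeg w x := by
    intro x hx
    rw [wdeg_eq_sum']
    exact Finset.sum_le_sum_of_subset_of_nonneg (Finset.subset_univ _)
      fun u _ _ => hnonneg x u
  have h' : ∑ x ∈ A, ∑ y ∈ Aᶜ, w x y
      ≤ (1/2) * ∑ x ∈ A, ((∑ y ∈ Aᶜ, w x y) + wdeg w x) := by
    rw [Finset.sum_add_distrib]
    have := Finset.sum_le_sum h
    linarith
  refine h'.trans ?_
  refine mul_le_mul_of_nonneg_left (Finset.sum_le_sum fun x hx => ?_) (by norm_num)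
  have := hnonneg x x
  linarith

lemma swap_step (w : α → α → ℝ) (hsymm : ∀ u v, w u v = w v u)
    (hnonneg : ∀ u v, 0 ≤ w u v) (C P : Finset α) (v : α) (hv : v ∈ C)
    (hP : P.Nonempty) (hdisj : Disjoint P C)
    (hdeg : ∀ u ∈ P, wdeg w v ≤ wdeg w u) :
    ∃ u ∈ P, covW w C - ((P.card : ℝ))⁻¹ * covW w C
      ≤ covW w (insert u (C.erase v)) := by
  set A := C.erase v with hA
  obtain ⟨u, huP, humin⟩ := Finset.exists_min_image P (fun u => ∑ x ∈ A, w u x) hP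
  refine ⟨u, huP, ?_⟩
  have hPpos : (0:ℝ) < P.card := by
    have := Finset.card_pos.mpr hP; exact_mod_cast this
  have hsum : ∑ u' ∈ P, ∑ x ∈ A, w u' x ≤ covW w C := by
    have h1 : ∑ u' ∈ P, ∑ x ∈ A, w u' x = ∑ x ∈ A, ∑ u' ∈ P, w x u' := by
      rw [Finset.sum_comm]
      exact Finset.sum_congr rfl fun x _ => Finset.sum_congr rfl fun u' _ => hsymm u' x
    have hPA : P ⊆ Aᶜ := by
      intro p hp
      simp only [mem_compl]
      intro hpA
      exact (Finset.disjoint_left.mp hdisj hp) (Finset.erase_subset _ _ hpA)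
    have h2 : ∑ x ∈ A, ∑ u' ∈ P, w x u' ≤ ∑ x ∈ A, ∑ y ∈ Aᶜ, w x y :=
      Finset.sum_le_sum fun x _ =>
        Finset.sum_le_sum_of_subset_of_nonneg hPA fun y _ _ => hnonneg x y
    have h3 := cross_le_covW' w hsymm hnonneg A
    have h4 : covW w A ≤ covW w C := covW_mono' w hnonneg (Finset.erase_subset _ _)
    linarith [h1 ▸ le_trans h2 (le_trans h3 h4)]
  have havg : ∑ x ∈ A, w u x ≤ ((P.card : ℝ))⁻¹ * covW w C := by
    have hmul : (P.card : ℝ) * ∑ x ∈ A, w u x ≤ ∑ u' ∈ P, ∑ x ∈ A, w u' x := by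
      have := Finset.card_nsmul_le_sum P (fun u' => ∑ x ∈ A, w u' x) (∑ x ∈ A, w u x)
        (fun u' hu' => humin u' hu')
      simpa [nsmul_eq_mul] using this
    rw [inv_mul_eq_div, le_div_iff₀ hPpos]
    linarith
  have huA : u ∉ A := fun h =>
    (Finset.disjoint_left.mp hdisj huP) (Finset.erase_subset _ _ h)
  have hvA : v ∉ A := Finset.notMem_erase _ _
  have hins : insert v A = C := Finset.insert_erase hv
  have hC : covW w C = covW w A + wdeg w v - ∑ x ∈ A, w v x := by
    rw [← hins] at *
    exact covW_insert' w hsymm hvA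
  have hCu : covW w (insert u A) = covW w A + wdeg w u - ∑ x ∈ A, w u x :=
    covW_insert' w hsymm huA
  have hvnonneg : 0 ≤ ∑ x ∈ A, w v x := Finset.sum_nonneg fun x _ => hnonneg v x
  have hdegvu := hdeg u huP
  linarith

lemma exists_subset_W (w : α → α → ℝ) (hsymm : ∀ u v, w u v = w v u)
    (hnonneg : ∀ u v, 0 ≤ w u v) (Ws : Finset α)
    (hWdeg : ∀ u ∈ Ws, ∀ v, v ∉ Ws → wdeg w v ≤ wdeg w u)
    (k m : ℕ) (hm : 0 < m) (hWbig : k + m ≤ Ws.card) (B : ℝ)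
    (hB : ∀ C : Finset α, C.card = k → covW w C ≤ B) :
    ∀ j (C : Finset α), C.card = k → (C \ Ws).card = j →
      ∃ D : Finset α, D ⊆ Ws ∧ D.card = k ∧
        covW w C - (j : ℝ) * ((m : ℝ)⁻¹ * B) ≤ covW w D := by
  intro j
  induction j with
  | zero =>
    intro C hC hCW
    refine ⟨C, ?_, hC, by simp⟩
    rw [← Finset.sdiff_eq_empty_iff_subset]
    exact Finset.card_eq_zero.mp hCW
  | succ j ih =>
    intro C hC hCW
    have hne : (C \ Ws).Nonempty := Finset.card_pos.mp (by omega)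
    obtain ⟨v, hv⟩ := hne
    have hvC : v ∈ C := (Finset.mem_sdiff.mp hv).1
    have hvW : v ∉ Ws := (Finset.mem_sdiff.mp hv).2
    set P := Ws \ C with hPdef
    have hPcard : m ≤ P.card := by
      have h := Finset.le_card_sdiff C Ws
      rw [← hPdef] at h
      omega
    have hPne : P.Nonempty := Finset.card_pos.mp (by omega)
    have hdisj : Disjoint P C := Finset.sdiff_disjoint
    obtain ⟨u, huP, hswap⟩ := swap_step w hsymm hnonneg C P v hvC hPne hdisj
      (fun u hu => hWdeg u (Finset.mem_sdiff.mp hu).1 v hvW)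
    set C₁ := insert u (C.erase v) with hC₁
    have huC : u ∉ C := (Finset.mem_sdiff.mp huP).2
    have huW : u ∈ Ws := (Finset.mem_sdiff.mp huP).1
    have huA : u ∉ C.erase v := fun h => huC (Finset.erase_subset _ _ h)
    have hC₁card : C₁.card = k := by
      rw [hC₁, Finset.card_insert_of_notMem huA, Finset.card_erase_of_mem hvC, hC]
      have : 0 < k := by
        by_contra h
        push_neg at h
        interval_cases k
        simp_all [Finset.card_eq_zero]
      omega
    have hC₁W : (C₁ \ Ws).card = j := by
      have : C₁ \ Ws = (C \ Ws).erase v := by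
        ext x
        simp only [hC₁, Finset.mem_sdiff, Finset.mem_insert, Finset.mem_erase]
        constructor
        · rintro ⟨hx1 | hx2, hx3⟩
          · exact absurd (hx1 ▸ huW) hx3
          · exact ⟨hx2.1, hx2.2, hx3⟩
        · rintro ⟨hx1, hx2, hx3⟩
          exact ⟨Or.inr ⟨hx1, hx2⟩, hx3⟩
      rw [this, Finset.card_erase_of_mem hv, hCW]
      omega
    obtain ⟨D, hDW, hDcard, hDbound⟩ := ih C₁ hC₁card hC₁W
    refine ⟨D, hDW, hDcard, ?_⟩
    have hBnn : 0 ≤ B := le_trans (covW_nonneg' w hnonneg C) (hB C hC)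
    have hstep : covW w C - (m : ℝ)⁻¹ * B ≤ covW w C₁ := by
      have h1 : ((P.card : ℝ))⁻¹ * covW w C ≤ (m : ℝ)⁻¹ * B := by
        have hm' : (0:ℝ) < m := by exact_mod_cast hm
        have hPm : (m : ℝ) ≤ P.card := by exact_mod_cast hPcard
        have hcov : 0 ≤ covW w C := covW_nonneg' w hnonneg C
        have hcovB : covW w C ≤ B := hB C hC
        have hinv : ((P.card : ℝ))⁻¹ ≤ (m : ℝ)⁻¹ := inv_anti₀ hm' hPm
        exact mul_le_mul hinv hcovB hcov (by positivity)
      linarith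
    push_cast
    linarith

end Aux

lemma covW_bridge (w : V → V → ℝ) (hsymm : ∀ u v, w u v = w v u)
    (W : Finset V) (w' : {x // x ∈ W} → {x // x ∈ W} → ℝ)
    (hoff : ∀ u v : {x // x ∈ W}, u ≠ v → w' u v = w u.1 v.1)
    (hdiag : ∀ u : {x // x ∈ W}, w' u u = w u.1 u.1 + ∑ v ∈ Wᶜ, w u.1 v)
    (T : Finset {x // x ∈ W}) :
    covW w' T = covW w (T.map (Function.Embedding.subtype fun x => x ∈ W)) := by
  set e : {x // x ∈ W} ↪ V := Function.Embedding.subtype fun x => x ∈ W with he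
  set Tm := T.map e with hTm
  have hsymm' : ∀ u v, w' u v = w' v u := by
    intro u v
    by_cases h : u = v
    · rw [h]
    · rw [hoff u v h, hoff v u (Ne.symm h), hsymm]
  rw [covW_eq_F' w' hsymm', covW_eq_F' w hsymm, hTm, Finset.sum_map]
  congr 1
  refine Finset.sum_congr rfl fun x hx => ?_
  have hex : e x = x.1 := rfl
  have ha : wdeg w' x = wdeg w x.1 + 0 := by
    rw [add_zero, wdeg_eq_sum', wdeg_eq_sum']
    have h1 : ∑ u : {x // x ∈ W}, w' x u
        = w' x x + ∑ u ∈ univ.erase x, w' x u :=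
      (Finset.add_sum_erase univ (w' x) (mem_univ x)).symm
    have h2 : ∑ u ∈ univ.erase x, w' x u = ∑ u ∈ univ.erase x, w x.1 u.1 := by
      refine Finset.sum_congr rfl fun u hu => ?_
      exact hoff x u (Ne.symm (Finset.mem_erase.mp hu).1)
    have h3 : ∑ u : {x // x ∈ W}, w x.1 u.1
        = w x.1 x.1 + ∑ u ∈ univ.erase x, w x.1 u.1 :=
      (Finset.add_sum_erase univ (fun u => w x.1 u.1) (mem_univ x)).symm
    have h4 : ∑ u : {x // x ∈ W}, w x.1 u.1 = ∑ v ∈ W, w x.1 v :=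
      (Finset.sum_subtype W (fun v => Iff.rfl) (w x.1)).symm
    have h5 : (∑ v ∈ W, w x.1 v) + ∑ v ∈ Wᶜ, w x.1 v = ∑ v, w x.1 v :=
      Finset.sum_add_sum_compl W _
    rw [h1, hdiag, h2]
    linarith [h3, h4, h5]
  have hb : ∑ y ∈ Tᶜ, w' x y = ∑ v ∈ W \ Tm, w x.1 v := by
    have h1 : ∑ y ∈ Tᶜ, w' x y = ∑ y ∈ Tᶜ, w x.1 y.1 := by
      refine Finset.sum_congr rfl fun y hy => ?_
      have : y ∉ T := Finset.mem_compl.mp hy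
      exact hoff x y (fun h => this (h ▸ hx))
    have h2 : Tᶜ.map e = W \ Tm := by
      ext v
      simp only [Finset.mem_map, Finset.mem_compl, Finset.mem_sdiff, hTm]
      constructor
      · rintro ⟨y, hyT, rfl⟩
        exact ⟨y.2, fun ⟨z, hzT, hz⟩ => hyT (by
          have : z = y := Subtype.ext (by exact hz)
          exact this ▸ hzT)⟩
      · rintro ⟨hvW, hvT⟩
        exact ⟨⟨v, hvW⟩, fun h => hvT ⟨⟨v, hvW⟩, h, rfl⟩, rfl⟩
    rw [h1, ← h2, Finset.sum_map]
    rfl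
  have hc : ∑ v ∈ Tmᶜ, w x.1 v = (∑ v ∈ W \ Tm, w x.1 v) + ∑ v ∈ Wᶜ, w x.1 v := by
    have hTmW : Tm ⊆ W := by
      intro v hv
      obtain ⟨y, _, rfl⟩ := Finset.mem_map.mp hv
      exact y.2
    have hsplit : Tmᶜ = (W \ Tm) ∪ Wᶜ := by
      ext v
      simp only [Finset.mem_compl, Finset.mem_union, Finset.mem_sdiff]
      constructor
      · intro h
        by_cases hvW : v ∈ W
        · exact Or.inl ⟨hvW, h⟩
        · exact Or.inr hvW
      · rintro (⟨_, h⟩ | h)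
        · exact h
        · exact fun hT => h (hTmW hT)
    have hdisj : Disjoint (W \ Tm) Wᶜ :=
      Finset.disjoint_left.mpr fun a ha hac =>
        (Finset.mem_compl.mp hac) ((Finset.mem_sdiff.mp ha).1)
    rw [hsplit, Finset.sum_union hdisj]
  rw [hdiag x, ha, hb, hex, hc]
  ring

theorem statement_14 (w : V → V → ℝ)
    (hsymm : ∀ u v, w u v = w v u) (hnonneg : ∀ u v, 0 ≤ w u v)
    (k : ℕ) (hk : 0 < k) (hkn : k ≤ Fintype.card V)
    (ε : ℝ) (hε : 0 < ε) (α : ℝ) (hα0 : 0 ≤ α) (hα1 : α ≤ 1)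
    (W : Finset V)
    (hWcard : W.card = min (k + ⌈(k : ℝ) / ε⌉₊) (Fintype.card V))
    (hWdeg : ∀ u ∈ W, ∀ v, v ∉ W → wdeg w v ≤ wdeg w u)
    (w' : {x // x ∈ W} → {x // x ∈ W} → ℝ)
    (hw'offdiag : ∀ u v : {x // x ∈ W}, u ≠ v → w' u v = w u.1 v.1)
    (hw'diag : ∀ u : {x // x ∈ W}, w' u u = w u.1 u.1 + ∑ v ∈ Wᶜ, w u.1 v)
    (S : Finset {x // x ∈ W}) (hS : S.card = k)
    (hSapx : ∀ S' : Finset {x // x ∈ W}, S'.card = k →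
      α * covW w' S' ≤ covW w' S) :
    ∀ S' : Finset V, S'.card = k →
      α * (1 - ε) * covW w S' ≤
        covW w (S.map (Function.Embedding.subtype fun x => x ∈ W)) := by
  intro S' hS'
  have hbridge := covW_bridge w hsymm W w' hw'offdiag hw'diag
  have hSnn : 0 ≤ covW w (S.map (Function.Embedding.subtype fun x => x ∈ W)) :=
    covW_nonneg' w hnonneg _
  by_cases hε1 : 1 ≤ ε
  · have h1 : α * (1 - ε) ≤ 0 := mul_nonpos_of_nonneg_of_nonpos hα0 (by linarith)
    have h2 : 0 ≤ covW w S' := covW_nonneg' w hnonneg _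
    nlinarith
  push_neg at hε1
  -- the optimum over all k-subsets
  have h𝒦ne : (univ.powersetCard k : Finset (Finset V)).Nonempty := by
    rw [Finset.powersetCard_nonempty]
    simpa using hkn
  set OPT := (univ.powersetCard k).sup' h𝒦ne (covW w) with hOPT
  have hOPTub : ∀ C : Finset V, C.card = k → covW w C ≤ OPT := by
    intro C hC
    exact Finset.le_sup' (covW w) (Finset.mem_powersetCard.mpr ⟨subset_univ _, hC⟩)
  obtain ⟨Copt, hCoptmem, hCopt⟩ := Finset.exists_mem_eq_sup' h𝒦ne (covW w)
  have hCoptcard : Copt.card = k := (Finset.mem_powersetCard.mp hCoptmem).2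
  have hOPTeq : covW w Copt = OPT := by rw [hOPT, hCopt]
  have hOPTnn : 0 ≤ OPT := hOPTeq ▸ covW_nonneg' w hnonneg Copt
  -- find a good k-subset D of W
  have hDex : ∃ D : Finset V, D ⊆ W ∧ D.card = k ∧ (1 - ε) * OPT ≤ covW w D := by
    set m := ⌈(k : ℝ) / ε⌉₊ with hm
    by_cases hcase : k + m ≤ Fintype.card V
    · have hmpos : 0 < m := Nat.ceil_pos.mpr (by positivity)
      have hWc : k + m ≤ W.card := by omega
      obtain ⟨D, hDW, hDc, hDb⟩ := exists_subset_W w hsymm hnonneg W hWdeg k m hmpos hWc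
        OPT hOPTub (Copt \ W).card Copt hCoptcard rfl
      refine ⟨D, hDW, hDc, ?_⟩
      have hjk : (Copt \ W).card ≤ k :=
        le_trans (Finset.card_le_card (Finset.sdiff_subset)) hCoptcard.le
      have hmle : (k : ℝ) / ε ≤ m := Nat.le_ceil _
      have hmR : (0:ℝ) < m := by exact_mod_cast hmpos
      have hkR : (0:ℝ) < k := by exact_mod_cast hk
      have hkm : (k : ℝ) * (m : ℝ)⁻¹ ≤ ε := by
        rw [← div_eq_mul_inv, div_le_iff₀ hmR]
        rw [div_le_iff₀ hε] at hmle
        linarith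
      have hloss : ((Copt \ W).card : ℝ) * ((m : ℝ)⁻¹ * OPT) ≤ ε * OPT := by
        have hjkR : ((Copt \ W).card : ℝ) ≤ (k : ℝ) := by exact_mod_cast hjk
        have h1 : ((Copt \ W).card : ℝ) * ((m : ℝ)⁻¹ * OPT)
            ≤ (k : ℝ) * ((m : ℝ)⁻¹ * OPT) := by
          apply mul_le_mul_of_nonneg_right hjkR (by positivity)
        have h2 : (k : ℝ) * ((m : ℝ)⁻¹ * OPT) ≤ ε * OPT := by
          rw [← mul_assoc]
          exact mul_le_mul_of_nonneg_right hkm hOPTnn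
        linarith
      nlinarith
    · have hWu : W = univ := by
        have : W.card = Fintype.card V := by omega
        exact Finset.eq_univ_of_card W this
      refine ⟨Copt, by rw [hWu]; exact subset_univ _, hCoptcard, ?_⟩
      nlinarith
  obtain ⟨D, hDW, hDc, hDb⟩ := hDex
  set D' : Finset {x // x ∈ W} := D.subtype (· ∈ W) with hD'
  have hD'map : D'.map (Function.Embedding.subtype fun x => x ∈ W) = D := by
    rw [hD', Finset.subtype_map]
    exact Finset.filter_true_of_mem (fun x hx => hDW hx)
  have hD'card : D'.card = k := by
    have := Finset.card_map (Function.Embedding.subtype fun x : V => x ∈ W) (s := D')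
    rw [hD'map] at this
    omega
  have h1 := hSapx D' hD'card
  rw [hbridge D', hbridge S, hD'map] at h1
  have h2 : covW w S' ≤ OPT := hOPTub S' hS'
  have h3 : 0 ≤ 1 - ε := by linarith
  calc α * (1 - ε) * covW w S' ≤ α * ((1 - ε) * OPT) := by
        rw [mul_assoc]
        exact mul_le_mul_of_nonneg_left
          (mul_le_mul_of_nonneg_left h2 h3) hα0
    _ ≤ α * covW w D := mul_le_mul_of_nonneg_left hDb hα0
    _ ≤ covW w (S.map (Function.Embedding.subtype fun x => x ∈ W)) := h1
end
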